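/- arXiv:2403.04431 — 3 statements merged into one kernel-verified Lean document; each statement's English description precedes it below -/
import Mathlib

section
/- Let {a(k)} be a sequence of nonnegative real numbers and {b(k)} a sequence of real numbers that is eventually nonnegative, i.e., there exists k̃ ≥ 0 such that b(k) ≥ 0 for all k ≥ k̃. Suppose ∑_{k=0}^∞ a(k) = ∞ and ∑_{k=0}^∞ a(k) b(k) < ∞ (the series of products converges). Then there exists a subsequence {b(k_t)} of {b(k)} (i.e., a strictly increasing map t ↦ k_t from ℕ to ℕ) such that lim_{t→∞} b(k_t) = 0. -/
open Filter Topology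

/-!
If `‖b i‖ ≥ ε` for all but finitely many `i`, then `‖a i‖ ≤ ε⁻¹ ‖a i b i‖` eventually, and since
summability over `ℝ` or `ℂ` is absolute, the summability of `a b` would force that of `a`. Hence
every ball around `0` is visited by `b` infinitely often, i.e. `0` is a cluster point of `b`, and a
cluster point of a sequence is the limit of a subsequence.
-/

theorem mapClusterPt_zero_of_not_summable_of_summable_mul {ι 𝕜 : Type*} [RCLike 𝕜]
    {a b : ι → 𝕜} (ha : ¬Summable a) (hab : Summable fun i => a i * b i) :
    MapClusterPt 0 cofinite b := by
  rw [Metric.nhds_basis_ball.mapClusterPt_iff_frequently]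
  intro ε hε
  by_contra hfar
  rw [not_frequently] at hfar
  refine ha ((summable_norm_iff.2 hab).mul_left ε⁻¹ |>.of_norm_bounded_eventually ?_)
  filter_upwards [hfar] with i hi
  have hεb : ε ≤ ‖b i‖ := by simpa using hi
  calc ‖a i‖ = ε⁻¹ * (ε * ‖a i‖) := by field_simp
    _ ≤ ε⁻¹ * ‖a i * b i‖ := by
      rw [norm_mul, mul_comm ‖a i‖]
      gcongr

theorem exists_subseq_tendsto_zero_general
    (a b : ℕ → ℝ)
    (ha_div : Tendsto (fun n => ∑ k ∈ Finset.range n, a k) atTop atTop)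
    (hab_sum : Summable fun k => a k * b k) :
    ∃ φ : ℕ → ℕ, StrictMono φ ∧ Tendsto (fun t => b (φ t)) atTop (𝓝 0) := by
  have ha : ¬Summable a := fun h => not_tendsto_atTop_of_tendsto_nhds h.tendsto_sum_tsum_nat ha_div
  have hcluster := mapClusterPt_zero_of_not_summable_of_summable_mul ha hab_sum
  rw [Nat.cofinite_eq_atTop] at hcluster
  exact hcluster.tendsto_subseq

/-- Lemma 3 of the paper: if `a(k) ≥ 0` with `∑ a(k) = ∞`, `b(k)` is eventually
nonnegative, and `∑ a(k) b(k)` converges, then there is a subsequence of `b`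
converging to `0`. -/
theorem exists_subseq_tendsto_zero
    (a b : ℕ → ℝ)
    (ha_nonneg : ∀ k, 0 ≤ a k)
    (hb_eventually_nonneg : ∃ ktilde : ℕ, ∀ k ≥ ktilde, 0 ≤ b k)
    (ha_div : Tendsto (fun n => ∑ k ∈ Finset.range n, a k) atTop atTop)
    (hab_sum : Summable fun k => a k * b k) :
    ∃ φ : ℕ → ℕ, StrictMono φ ∧ Tendsto (fun t => b (φ t)) atTop (𝓝 0) :=
  exists_subseq_tendsto_zero_general a b ha_div hab_sum
end

section
/- Let Θ ⊂ ℝ^m be a nonempty convex compact set, let g_i : ℝ^m → ℝ be convex for i = 1,…,N, let α* = min_{θ∈Θ} max_{i=1,…,N} g_i(θ), let ḡ_i((θ,α)) = max{g_i(θ) − α, 0}, and let p_i > 1 for all i. Then for θ ∈ Θ and α ∈ ℝ, equality α + ∑_{i=1}^N p_i ḡ_i((θ,α)) = α* holds if and only if α = α* and max_{i=1,…,N} g_i(θ) = α* (i.e., θ is an optimal solution of the minmax problem). -/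
/-!
Write `F(α) = α + ∑ i, p i * max (g i θ - α) 0` and let `g j θ` be the largest of the `g i θ`.
Since `p j ≥ 1`, `g j θ ≤ α + p j * max (g j θ - α) 0 ≤ F(α)`, so `α* ≤ max_i g i θ ≤ F(α)`.
The inequality `g j θ ≤ F(α)` is an equality exactly when `α = g j θ`: for larger `α` already
`F(α) ≥ α` is too big, and for smaller `α` the weight `p j > 1` makes the `j`-th term exceed
`g j θ - α`. Hence `F(α) = α*` forces both `max_i g i θ = α*` and `α = α*`.
-/

section PenaltyValue

variable {R ι : Type*} [CommRing R] [LinearOrder R] [IsStrictOrderedRing R] [Fintype ι]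
  (a p : ι → R) (α : R)

theorem mul_max_sub_le_sum (hp : ∀ k, 0 ≤ p k) (i : ι) :
    p i * max (a i - α) 0 ≤ ∑ k, p k * max (a k - α) 0 :=
  Finset.single_le_sum (f := fun k => p k * max (a k - α) 0)
    (fun k _ => mul_nonneg (hp k) (le_max_right _ _)) (Finset.mem_univ i)

theorem le_add_sum_mul_max_sub (hp : ∀ k, 0 ≤ p k) {i : ι} (hpi : 1 ≤ p i) :
    a i ≤ α + ∑ k, p k * max (a k - α) 0 :=
  calc a i = α + (a i - α) := by ring
    _ ≤ α + 1 * max (a i - α) 0 := by rw [one_mul]; gcongr; exact le_max_left _ _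
    _ ≤ α + p i * max (a i - α) 0 := by gcongr
    _ ≤ α + ∑ k, p k * max (a k - α) 0 := by gcongr; exact mul_max_sub_le_sum a p α hp i

theorem lt_add_sum_mul_max_sub (hp : ∀ k, 0 ≤ p k) {j : ι} (hpj : 1 < p j) (hα : α < a j) :
    a j < α + ∑ k, p k * max (a k - α) 0 :=
  calc a j = α + 1 * (a j - α) := by ring
    _ < α + p j * (a j - α) := by gcongr
    _ = α + p j * max (a j - α) 0 := by rw [max_eq_left (sub_pos.2 hα).le]
    _ ≤ α + ∑ k, p k * max (a k - α) 0 := by gcongr; exact mul_max_sub_le_sum a p α hp j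

theorem add_sum_mul_max_sub_eq_self (h : ∀ k, a k ≤ α) :
    α + ∑ k, p k * max (a k - α) 0 = α := by
  simp [max_eq_right (sub_nonpos.2 (h _))]

theorem add_sum_mul_max_sub_eq_iff {j : ι} (hj : ∀ i, a i ≤ a j) (hp : ∀ i, 1 < p i) :
    α + ∑ k, p k * max (a k - α) 0 = a j ↔ α = a j := by
  have hp0 : ∀ k, 0 ≤ p k := fun k => zero_le_one.trans (hp k).le
  refine ⟨fun h => ?_, fun h => by rw [h]; exact add_sum_mul_max_sub_eq_self a p _ hj⟩
  rcases lt_trichotomy α (a j) with hlt | heq | hgt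
  · exact absurd h (lt_add_sum_mul_max_sub a p α hp0 (hp j) hlt).ne'
  · exact heq
  · have hα : α ≤ α + ∑ k, p k * max (a k - α) 0 :=
      le_add_of_nonneg_right (Finset.sum_nonneg fun k _ => mul_nonneg (hp0 k) (le_max_right _ _))
    exact absurd h (hgt.trans_le hα).ne'

end PenaltyValue

theorem penalty_eq_minmax_iff_general
    {m : ℕ} {ι : Type*} [Fintype ι] [Nonempty ι]
    (Θ : Set (EuclideanSpace ℝ (Fin m)))
    (g : ι → EuclideanSpace ℝ (Fin m) → ℝ)
    (p : ι → ℝ) (hp : ∀ i, 1 < p i)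
    (αstar : ℝ)
    (hαstar : IsLeast ((fun θ => ⨆ i, g i θ) '' Θ) αstar) :
    ∀ θ ∈ Θ, ∀ α : ℝ,
      (α + ∑ i, p i * max (g i θ - α) 0 = αstar ↔
        α = αstar ∧ (⨆ i, g i θ) = αstar) := by
  intro θ hθ α
  obtain ⟨j, hj⟩ := exists_eq_ciSup_of_finite (f := fun i => g i θ)
  have hmax : ∀ i, g i θ ≤ g j θ := fun i =>
    hj ▸ le_ciSup (f := fun i => g i θ) (Set.finite_range _).bddAbove i
  have hstar : αstar ≤ g j θ := hj ▸ hαstar.2 ⟨θ, hθ, rfl⟩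
  rw [← hj]
  constructor
  · intro h
    have hp0 : ∀ i, 0 ≤ p i := fun i => zero_le_one.trans (hp i).le
    have hj' : g j θ = αstar :=
      le_antisymm ((le_add_sum_mul_max_sub _ p α hp0 (hp j).le).trans h.le) hstar
    exact ⟨(add_sum_mul_max_sub_eq_iff _ p α hmax hp).1 (h.trans hj'.symm) |>.trans hj', hj'⟩
  · rintro ⟨rfl, hj'⟩
    exact add_sum_mul_max_sub_eq_self _ p α fun i => (hmax i).trans hj'.le

/-- Lemma 4 of the paper (equality case): with `α* = min_{θ∈Θ} max_i g_i(θ)` and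
penalty weights `p_i > 1`, for `θ ∈ Θ` and `α ∈ ℝ`, equality
`α + ∑ i, p_i · max{g_i(θ) − α, 0} = α*` holds if and only if `α = α*` and
`max_i g_i(θ) = α*` (i.e., `θ` is optimal for the minmax problem). -/
theorem penalty_eq_minmax_iff
    {m : ℕ} {ι : Type*} [Fintype ι] [Nonempty ι]
    (Θ : Set (EuclideanSpace ℝ (Fin m)))
    (hΘne : Θ.Nonempty) (hΘconv : Convex ℝ Θ) (hΘcomp : IsCompact Θ)
    (g : ι → EuclideanSpace ℝ (Fin m) → ℝ)
    (hg : ∀ i, ConvexOn ℝ Set.univ (g i))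
    (p : ι → ℝ) (hp : ∀ i, 1 < p i)
    (αstar : ℝ)
    (hαstar : IsLeast ((fun θ => ⨆ i, g i θ) '' Θ) αstar) :
    ∀ θ ∈ Θ, ∀ α : ℝ,
      (α + ∑ i, p i * max (g i θ - α) 0 = αstar ↔
        α = αstar ∧ (⨆ i, g i θ) = αstar) :=
  penalty_eq_minmax_iff_general Θ g p hp αstar hαstar
end

section
/- Let Θ ⊂ ℝ^m be a nonempty convex compact set with Euclidean projection P_Θ, let g_i : ℝ^m → ℝ be convex for i = 1,…,N, and let θ* ∈ Θ, α* ∈ ℝ satisfy g_i(θ*) ≤ α* for all i. Let θ ∈ Θ, α ∈ ℝ, η > 0, let h_1,…,h_N be positive reals with ∑_{i=1}^N h_i = 1, and let p_1,…,p_N satisfy 0 < p_i ≤ p_max. Set v = α − η/N; for each i let u_i be a subgradient of g_i at θ with ‖u_i‖ ≤ L, let χ_i = 1 if g_i(θ) ≥ v and χ_i = 0 otherwise, and define θ_i = θ − η p_i χ_i u_i, α_i = v + η p_i χ_i, θ⁺ = P_Θ(∑_{i=1}^N h_i θ_i), α⁺ = ∑_{i=1}^N h_i α_i. Then, with ḡ_i((θ,α))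 = max{g_i(θ) − α, 0}, the following one-step descent inequality holds: ‖θ⁺ − θ*‖² + (α⁺ − α*)² ≤ ‖θ − θ*‖² + (α − α*)² − (2η/N)(α − α*) − 2η ∑_{i=1}^N h_i p_i ḡ_i((θ,α)) + η² ( p_max²(L² + 1) + 1/N² + 2 p_max / N ). -/
/-!
Write `c i = h i * p i * χ i`, `w = ∑ c i • u i` and `q = ∑ c i`. The aggregated step is
`(θ - η w, α - η/N + η q)`, and projecting onto `Θ` only brings it closer to `θstar ∈ Θ`.
Expanding the squares leaves the cross term `-2η (⟪θ - θstar, w⟫ + q (αstar - v))`; agent by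
agent, the subgradient inequality and `g i θstar ≤ αstar` bound it by
`-2η ∑ h i p i ḡ_i + 2η (η/N) pmax`, and the quadratic terms are controlled by
`‖w‖ ≤ q L` and `0 ≤ q ≤ pmax`.
-/

open RealInnerProductSpace Finset

/-- The variational inequality `⟪x - y, s - y⟫ ≤ 0` of the nearest point `y` kills the cross
term in the expansion of `‖(x - y) - (s - y)‖²`. -/
theorem Convex.norm_sub_le_of_forall_norm_sub_le {F : Type*} [NormedAddCommGroup F]
    [InnerProductSpace ℝ F] {K : Set F} (hK : Convex ℝ K) {x y s : F}
    (hy : y ∈ K) (hmin : ∀ t ∈ K, ‖y - x‖ ≤ ‖t - x‖) (hs : s ∈ K) : ‖y - s‖ ≤ ‖x - s‖ := by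
  have : Nonempty K := ⟨⟨y, hy⟩⟩
  have hinf : ‖x - y‖ = ⨅ t : K, ‖x - t‖ :=
    le_antisymm (le_ciInf fun t => by simpa only [norm_sub_rev] using hmin t t.2)
      (ciInf_le ⟨0, Set.forall_mem_range.2 fun _ => norm_nonneg _⟩ (⟨y, hy⟩ : K))
  have hvar := (norm_eq_iInf_iff_real_inner_le_zero hK hy).1 hinf s hs
  have hexp : ‖x - s‖ ^ 2 = ‖x - y‖ ^ 2 - 2 * ⟪x - y, s - y⟫ + ‖s - y‖ ^ 2 := by
    rw [← norm_sub_sq_real, sub_sub_sub_cancel_right]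
  rw [norm_sub_rev y s, ← pow_le_pow_iff_left₀ (norm_nonneg _) (norm_nonneg _) two_ne_zero]
  nlinarith [sq_nonneg ‖x - y‖]

theorem Finset.sum_mul_le_of_sum_eq_one {ι : Type*} {s : Finset ι} {h f : ι → ℝ} {M : ℝ}
    (h0 : ∀ i ∈ s, 0 ≤ h i) (hh : ∑ i ∈ s, h i = 1) (hf : ∀ i ∈ s, f i ≤ M) :
    ∑ i ∈ s, h i * f i ≤ M :=
  calc ∑ i ∈ s, h i * f i ≤ ∑ i ∈ s, h i * M :=
        sum_le_sum fun i hi => mul_le_mul_of_nonneg_left (hf i hi) (h0 i hi)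
    _ = M := by rw [← sum_mul, hh, one_mul]

theorem norm_sum_smul_le_sum_mul {ι E : Type*} [SeminormedAddCommGroup E] [NormedSpace ℝ E]
    (s : Finset ι) {c : ι → ℝ} {u : ι → E} {L : ℝ} (hc : ∀ i ∈ s, 0 ≤ c i)
    (hu : ∀ i ∈ s, ‖u i‖ ≤ L) : ‖∑ i ∈ s, c i • u i‖ ≤ (∑ i ∈ s, c i) * L :=
  calc ‖∑ i ∈ s, c i • u i‖ ≤ ∑ i ∈ s, ‖c i • u i‖ := norm_sum_le _ _
    _ ≤ ∑ i ∈ s, c i * L := sum_le_sum fun i hi => by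
        rw [norm_smul, Real.norm_of_nonneg (hc i hi)]
        exact mul_le_mul_of_nonneg_left (hu i hi) (hc i hi)
    _ = (∑ i ∈ s, c i) * L := (sum_mul _ _ _).symm

section Descent

variable {E : Type*} [NormedAddCommGroup E] [InnerProductSpace ℝ E]

/-- The slack `δ` absorbs the penalty of an agent that does not step (`f x < α - δ`). -/
theorem max_sub_sub_le_ite_mul {f : E → ℝ} {x xstar u : E} {α αstar δ : ℝ} (hδ : 0 ≤ δ)
    (hsub : f x + ⟪u, xstar - x⟫ ≤ f xstar) (hfeas : f xstar ≤ αstar) :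
    max (f x - α) 0 - δ ≤
      (if α - δ ≤ f x then 1 else 0) * (⟪x - xstar, u⟫ + (αstar - (α - δ))) := by
  have hu : f x - αstar ≤ ⟪x - xstar, u⟫ := by
    rw [← neg_sub xstar x, inner_neg_left, real_inner_comm]
    linarith
  split_ifs with hstep
  · rw [one_mul, sub_le_iff_le_add]
    exact max_le (by linarith) (by linarith)
  · rw [zero_mul, max_eq_right (by linarith)]
    linarith

theorem sum_mul_max_sub_le_inner_add {ι : Type*} (s : Finset ι) {f : ι → E → ℝ} {x xstar : E}
    {u : ι → E} {ω χ : ι → ℝ} {α αstar δ : ℝ} (hω : ∀ i ∈ s, 0 ≤ ω i) (hδ : 0 ≤ δ)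
    (hχ : ∀ i ∈ s, χ i = if α - δ ≤ f i x then 1 else 0)
    (hsub : ∀ i ∈ s, f i x + ⟪u i, xstar - x⟫ ≤ f i xstar) (hfeas : ∀ i ∈ s, f i xstar ≤ αstar) :
    ∑ i ∈ s, ω i * max (f i x - α) 0 - δ * ∑ i ∈ s, ω i ≤
      ⟪x - xstar, ∑ i ∈ s, (ω i * χ i) • u i⟫ + (∑ i ∈ s, ω i * χ i) * (αstar - (α - δ)) :=
  calc ∑ i ∈ s, ω i * max (f i x - α) 0 - δ * ∑ i ∈ s, ω i
      = ∑ i ∈ s, ω i * (max (f i x - α) 0 - δ) := by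
        rw [mul_sum, ← sum_sub_distrib]
        exact sum_congr rfl fun i _ => by ring
    _ ≤ ∑ i ∈ s, ω i * (χ i * (⟪x - xstar, u i⟫ + (αstar - (α - δ)))) :=
        sum_le_sum fun i hi => mul_le_mul_of_nonneg_left
          (hχ i hi ▸ max_sub_sub_le_ite_mul hδ (hsub i hi) (hfeas i hi)) (hω i hi)
    _ = _ := by
        simp only [inner_sum, real_inner_smul_right, sum_mul, ← sum_add_distrib]
        exact sum_congr rfl fun i _ => by ring

theorem norm_sub_smul_sq_add_sq_le {d w : E} {a δ η q G pmax L : ℝ} (hη : 0 ≤ η) (hq0 : 0 ≤ q)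
    (hqp : q ≤ pmax) (hw : ‖w‖ ≤ q * L) (hgain : G - δ * pmax ≤ ⟪d, w⟫ + q * (δ - a)) :
    ‖d - η • w‖ ^ 2 + (a - δ + η * q) ^ 2 ≤
      ‖d‖ ^ 2 + a ^ 2 - 2 * δ * a - 2 * η * G + η ^ 2 * (pmax ^ 2 * (L ^ 2 + 1))
        + δ ^ 2 + 2 * η * δ * pmax := by
  have hq2 : q ^ 2 ≤ pmax ^ 2 := pow_le_pow_left₀ hq0 hqp 2
  have hw2 : ‖w‖ ^ 2 ≤ pmax ^ 2 * L ^ 2 :=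
    (pow_le_pow_left₀ (norm_nonneg w) hw 2).trans
      (by rw [mul_pow]; exact mul_le_mul_of_nonneg_right hq2 (sq_nonneg L))
  rw [norm_sub_sq_real, real_inner_smul_right, norm_smul, Real.norm_of_nonneg hη]
  nlinarith [mul_le_mul_of_nonneg_left hgain hη, mul_le_mul_of_nonneg_left hw2 (sq_nonneg η),
    mul_le_mul_of_nonneg_left hq2 (sq_nonneg η)]

end Descent

theorem fedfair_one_step_descent_general
    {m N : ℕ}
    (Θ : Set (EuclideanSpace ℝ (Fin m)))
    (hΘconv : Convex ℝ Θ)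
    (P : EuclideanSpace ℝ (Fin m) → EuclideanSpace ℝ (Fin m))
    (hPmem : ∀ x, P x ∈ Θ)
    (hPproj : ∀ x, ∀ s ∈ Θ, ‖P x - x‖ ≤ ‖s - x‖)
    (g : Fin N → EuclideanSpace ℝ (Fin m) → ℝ)
    (θstar : EuclideanSpace ℝ (Fin m)) (hθstar : θstar ∈ Θ)
    (αstar : ℝ) (hfeas : ∀ i, g i θstar ≤ αstar)
    (θ : EuclideanSpace ℝ (Fin m)) (α : ℝ)
    (η : ℝ) (hη : 0 < η)
    (h : Fin N → ℝ) (hh_pos : ∀ i, 0 < h i) (hh_sum : ∑ i, h i = 1)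
    (p : Fin N → ℝ) (pmax : ℝ) (hp_pos : ∀ i, 0 < p i) (hp_max : ∀ i, p i ≤ pmax)
    (v : ℝ) (hv : v = α - η / N)
    (u : Fin N → EuclideanSpace ℝ (Fin m)) (L : ℝ)
    (hsub : ∀ i, ∀ y, g i θ + ⟪u i, y - θ⟫ ≤ g i y)
    (hL : ∀ i, ‖u i‖ ≤ L)
    (χ : Fin N → ℝ) (hχ : ∀ i, χ i = if v ≤ g i θ then 1 else 0)
    (θi : Fin N → EuclideanSpace ℝ (Fin m))
    (hθi : ∀ i, θi i = θ - (η * p i * χ i) • u i)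
    (αi : Fin N → ℝ) (hαi : ∀ i, αi i = v + η * p i * χ i)
    (θplus : EuclideanSpace ℝ (Fin m)) (hθplus : θplus = P (∑ i, h i • θi i))
    (αplus : ℝ) (hαplus : αplus = ∑ i, h i * αi i) :
    ‖θplus - θstar‖ ^ 2 + (αplus - αstar) ^ 2 ≤
      ‖θ - θstar‖ ^ 2 + (α - αstar) ^ 2 - (2 * η / N) * (α - αstar)
        - 2 * η * ∑ i, h i * p i * max (g i θ - α) 0
        + η ^ 2 * (pmax ^ 2 * (L ^ 2 + 1) + 1 / (N : ℝ) ^ 2 + 2 * pmax / N) := by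
  subst hv hθplus hαplus
  have hω : ∀ i ∈ univ, 0 ≤ h i * p i := fun i _ => mul_nonneg (hh_pos i).le (hp_pos i).le
  have hχ01 : ∀ i, 0 ≤ χ i ∧ χ i ≤ 1 := fun i => by rw [hχ i]; split_ifs <;> norm_num
  set w := ∑ i, (h i * p i * χ i) • u i
  set q := ∑ i, h i * p i * χ i
  have hc : ∀ i ∈ univ, 0 ≤ h i * p i * χ i := fun i hi => mul_nonneg (hω i hi) (hχ01 i).1
  have hqp : q ≤ pmax := by
    simp only [q, mul_assoc]
    exact sum_mul_le_of_sum_eq_one (fun i _ => (hh_pos i).le) hh_sum fun i _ =>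
      (mul_le_of_le_one_right (hp_pos i).le (hχ01 i).2).trans (hp_max i)
  have hθagg : ∑ i, h i • θi i = θ - η • w := by
    simp only [hθi, smul_sub, sum_sub_distrib, ← sum_smul, hh_sum, one_smul, w, smul_sum,
      smul_smul]
    congr! 3 with i
    ring
  have hαagg : ∑ i, h i * αi i = α - η / N + η * q := by
    simp only [hαi, mul_add, sum_add_distrib, ← sum_mul, hh_sum, one_mul, q, mul_sum]
    congr! 2 with i
    ring
  have hgain : ∑ i, h i * p i * max (g i θ - α) 0 - η / N * pmax ≤
      ⟪θ - θstar, w⟫ + q * (η / N - (α - αstar)) := by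
    have hδ : 0 ≤ η / N := by positivity
    have hsum := sum_mul_max_sub_le_inner_add univ hω hδ (fun i _ => hχ i)
      (fun i _ => hsub i θstar) (fun i _ => hfeas i)
    have hωp := mul_le_mul_of_nonneg_left
      (sum_mul_le_of_sum_eq_one (fun i _ => (hh_pos i).le) hh_sum fun i _ => hp_max i) hδ
    linear_combination hsum + hωp
  have hproj : ‖P (θ - η • w) - θstar‖ ≤ ‖(θ - θstar) - η • w‖ := by
    rw [sub_right_comm]
    exact hΘconv.norm_sub_le_of_forall_norm_sub_le (hPmem _) (hPproj _) hθstar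
  calc ‖P (∑ i, h i • θi i) - θstar‖ ^ 2 + (∑ i, h i * αi i - αstar) ^ 2
      ≤ ‖(θ - θstar) - η • w‖ ^ 2 + ((α - αstar) - η / N + η * q) ^ 2 := by
        rw [hθagg, hαagg]
        exact add_le_add (pow_le_pow_left₀ (norm_nonneg _) hproj 2) (le_of_eq (by ring))
    _ ≤ _ := norm_sub_smul_sq_add_sq_le hη.le (sum_nonneg hc) hqp
        (norm_sum_smul_le_sum_mul univ hc fun i _ => hL i) hgain
    _ = _ := by ring

/-- Deterministic one-step descent inequality for the FedFAir iteration: the server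
shifts `α` by `−η/N`, each agent takes a subgradient step on `p_i ḡ_i`, and the server
aggregates with normalized weights `h_i` and projects onto `Θ`. -/
theorem fedfair_one_step_descent
    {m N : ℕ} (hN : 0 < N)
    (Θ : Set (EuclideanSpace ℝ (Fin m)))
    (hΘne : Θ.Nonempty) (hΘconv : Convex ℝ Θ) (hΘcomp : IsCompact Θ)
    (P : EuclideanSpace ℝ (Fin m) → EuclideanSpace ℝ (Fin m))
    (hPmem : ∀ x, P x ∈ Θ)
    (hPproj : ∀ x, ∀ s ∈ Θ, ‖P x - x‖ ≤ ‖s - x‖)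
    (g : Fin N → EuclideanSpace ℝ (Fin m) → ℝ)
    (hg : ∀ i, ConvexOn ℝ Set.univ (g i))
    (θstar : EuclideanSpace ℝ (Fin m)) (hθstar : θstar ∈ Θ)
    (αstar : ℝ) (hfeas : ∀ i, g i θstar ≤ αstar)
    (θ : EuclideanSpace ℝ (Fin m)) (hθ : θ ∈ Θ) (α : ℝ)
    (η : ℝ) (hη : 0 < η)
    (h : Fin N → ℝ) (hh_pos : ∀ i, 0 < h i) (hh_sum : ∑ i, h i = 1)
    (p : Fin N → ℝ) (pmax : ℝ) (hp_pos : ∀ i, 0 < p i) (hp_max : ∀ i, p i ≤ pmax)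
    (v : ℝ) (hv : v = α - η / N)
    (u : Fin N → EuclideanSpace ℝ (Fin m)) (L : ℝ)
    (hsub : ∀ i, ∀ y, g i θ + ⟪u i, y - θ⟫ ≤ g i y)
    (hL : ∀ i, ‖u i‖ ≤ L)
    (χ : Fin N → ℝ) (hχ : ∀ i, χ i = if v ≤ g i θ then 1 else 0)
    (θi : Fin N → EuclideanSpace ℝ (Fin m))
    (hθi : ∀ i, θi i = θ - (η * p i * χ i) • u i)
    (αi : Fin N → ℝ) (hαi : ∀ i, αi i = v + η * p i * χ i)
    (θplus : EuclideanSpace ℝ (Fin m)) (hθplus : θplus = P (∑ i, h i • θi i))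
    (αplus : ℝ) (hαplus : αplus = ∑ i, h i * αi i) :
    ‖θplus - θstar‖ ^ 2 + (αplus - αstar) ^ 2 ≤
      ‖θ - θstar‖ ^ 2 + (α - αstar) ^ 2 - (2 * η / N) * (α - αstar)
        - 2 * η * ∑ i, h i * p i * max (g i θ - α) 0
        + η ^ 2 * (pmax ^ 2 * (L ^ 2 + 1) + 1 / (N : ℝ) ^ 2 + 2 * pmax / N) :=
  fedfair_one_step_descent_general Θ hΘconv P hPmem hPproj g θstar hθstar αstar hfeas θ α η hη h
    hh_pos hh_sum p pmax hp_pos hp_max v hv u L hsub hL χ hχ θi hθi αi hαi θplus hθplus αplus hαplus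
end
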